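/- For $-7/4 < s \leq 0$, the bilinear operator $B_2(u,v)_k = \sum_{k_1+k_2=k,\,k_1,k_2\neq0} \frac{e^{i3kk_1k_2t}}{k_1k_2} u_{k_1}v_{k_2}$ maps $\dot H^0 \times \dot H^s$ into $\dot H^s$ with $\|B_2(u,v)\|_{\dot H^s} \leq c_2''(s) \|u\|_{\dot H^0}\|v\|_{\dot H^s}$ for a finite constant $c_2''(s)$. -/

import Mathlib

/-!
Write `k₁ = j`, `k₂ = k - j`. Since the phase has modulus one, the weighted coefficient
`|k|^s |B₂(u,v)_k|` is at most `∑ⱼ K₂(k,j) |u_j| (|k-j|^s |v_{k-j}|)`. Cauchy–Schwarz in `j`,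
then summing over `k` and exchanging the sums, reduces the estimate to a uniform bound on the
column sums `∑ₖ K₂(k,j)²`. For `-2 ≤ s ≤ 0` the triangle inequalities `|k| ≤ 2|j||k-j|` and
`|k-j| ≤ 2|j||k|` give `K₂(k,j)² ≤ 4/k²`, which is summable. All sums are taken in `ℝ≥0∞`,
so no summability has to be checked along the way.
-/

open Complex

noncomputable def hnorm (s : ℝ) (u : ℤ → ℂ) : ℝ :=
  (∑' k : ℤ, |(k : ℝ)| ^ (2 * s) * ‖u k‖ ^ 2) ^ ((1 : ℝ) / 2)

noncomputable def B2 (t : ℝ) (u v : ℤ → ℂ) (k : ℤ) : ℂ :=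
  ∑' k1 : ℤ, Complex.exp (Complex.I * (3 * (k : ℂ) * (k1 : ℂ) * ((k : ℂ) - (k1 : ℂ)) * (t : ℂ)))
      / ((k1 : ℂ) * ((k : ℂ) - (k1 : ℂ))) * u k1 * v (k - k1)

open scoped ENNReal

namespace ENNReal

theorem tsum_mul_sq_le {ι : Type*} (f g : ι → ℝ≥0∞) :
    (∑' i, f i * g i) ^ 2 ≤ (∑' i, f i ^ 2) * ∑' i, g i ^ 2 := by
  rw [ENNReal.tsum_eq_iSup_sum, iSup_pow_of_ne_zero two_ne_zero]
  refine iSup_le fun s => ?_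
  have hCS := inner_le_Lp_mul_Lq s f g Real.HolderConjugate.two_two
  simp only [rpow_two] at hCS
  calc (∑ i ∈ s, f i * g i) ^ 2
      ≤ ((∑ i ∈ s, f i ^ 2) ^ (1 / 2 : ℝ) * (∑ i ∈ s, g i ^ 2) ^ (1 / 2 : ℝ)) ^ 2 := by
        gcongr
    _ = (∑ i ∈ s, f i ^ 2) * ∑ i ∈ s, g i ^ 2 := by
        rw [mul_pow, ← rpow_two, ← rpow_two, ← rpow_mul, ← rpow_mul]
        norm_num
    _ ≤ (∑' i, f i ^ 2) * ∑' i, g i ^ 2 := by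
        gcongr <;> exact ENNReal.sum_le_tsum s

theorem tsum_sq_le_of_le_tsum_conv {G : Type*} [AddGroup G] {F a b : G → ℝ≥0∞}
    (K : G → G → ℝ≥0∞) {M : ℝ≥0∞} (hF : ∀ k, F k ≤ ∑' j, K k j * a j * b (k - j))
    (hK : ∀ j, ∑' k, K k j ^ 2 ≤ M) :
    ∑' k, F k ^ 2 ≤ M * (∑' j, a j ^ 2) * ∑' j, b j ^ 2 := by
  have hrow (k : G) : F k ^ 2 ≤ (∑' j, K k j ^ 2 * a j ^ 2) * ∑' j, b j ^ 2 :=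
    calc F k ^ 2 ≤ (∑' j, K k j * a j * b (k - j)) ^ 2 := by gcongr; exact hF k
      _ ≤ (∑' j, (K k j * a j) ^ 2) * ∑' j, b (k - j) ^ 2 := tsum_mul_sq_le _ _
      _ = (∑' j, K k j ^ 2 * a j ^ 2) * ∑' j, b j ^ 2 := by
        simp_rw [mul_pow]
        exact congrArg _ ((Equiv.subLeft k).tsum_eq fun j => b j ^ 2)
  calc ∑' k, F k ^ 2 ≤ ∑' k, (∑' j, K k j ^ 2 * a j ^ 2) * ∑' j, b j ^ 2 :=
        ENNReal.tsum_le_tsum hrow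
    _ = (∑' j, (∑' k, K k j ^ 2) * a j ^ 2) * ∑' j, b j ^ 2 := by
        rw [ENNReal.tsum_mul_right, ENNReal.tsum_comm]
        simp_rw [ENNReal.tsum_mul_right]
    _ ≤ (∑' j, M * a j ^ 2) * ∑' j, b j ^ 2 := by gcongr with j; exact hK j
    _ = M * (∑' j, a j ^ 2) * ∑' j, b j ^ 2 := by rw [ENNReal.tsum_mul_left]

theorem toReal_rpow_half_le_of_le_mul {a b c M : ℝ≥0∞} (h : a ≤ M * b * c) (hM : M ≠ ⊤)
    (hb : b ≠ ⊤) (hc : c ≠ ⊤) :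
    a.toReal ^ (1 / 2 : ℝ) ≤
      M.toReal ^ (1 / 2 : ℝ) * b.toReal ^ (1 / 2 : ℝ) * c.toReal ^ (1 / 2 : ℝ) := by
  rw [← Real.mul_rpow toReal_nonneg toReal_nonneg, ← Real.mul_rpow (by positivity) toReal_nonneg,
    ← toReal_mul, ← toReal_mul]
  exact Real.rpow_le_rpow toReal_nonneg (toReal_mono (by finiteness) h) (by norm_num)

end ENNReal

theorem Real.rpow_div_le_sq {x y w r : ℝ} (hx : 0 < x) (hy : 0 < y) (hw : 1 ≤ w)
    (hxy : x ≤ w * y) (hyx : y ≤ w * x) (hr : |r| ≤ 2) : (x / y) ^ r ≤ w ^ 2 := by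
  wlog hr0 : 0 ≤ r generalizing x y r
  · have := this hy hx hyx hxy (r := -r) (by rwa [abs_neg]) (by linarith)
    rwa [Real.rpow_neg (by positivity), ← Real.inv_rpow (by positivity), inv_div] at this
  calc (x / y) ^ r ≤ w ^ r := Real.rpow_le_rpow (by positivity) ((div_le_iff₀ hy).2 hxy) hr0
    _ ≤ w ^ (2 : ℝ) := Real.rpow_le_rpow_of_exponent_le hw (abs_le.1 hr).2
    _ = w ^ 2 := Real.rpow_two w

theorem kernel_sq_le_of_triangle {x y z s : ℝ} (hx : 1 ≤ x) (hy : 1 ≤ y) (hz : 1 ≤ z)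
    (hxy : x ≤ y + z) (hyx : y ≤ x + z) (hs1 : -2 ≤ s) (hs2 : s ≤ 0) :
    (x ^ s * y ^ (-s) / (z * y)) ^ 2 ≤ 4 / x ^ 2 := by
  have hx0 : 0 < x := by linarith
  have hy0 : 0 < y := by linarith
  have hratio : (x / y) ^ (2 * s + 2) ≤ (2 * z) ^ 2 :=
    Real.rpow_div_le_sq hx0 hy0 (by linarith) (by nlinarith) (by nlinarith)
      (abs_le.2 ⟨by linarith, by linarith⟩)
  have hsplit : x ^ s * y ^ (-s) / (z * y) = (x / y) ^ (s + 1) / (x * z) := by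
    rw [Real.rpow_add_one (by positivity), Real.div_rpow hx0.le hy0.le, Real.rpow_neg hy0.le]
    field_simp
  rw [hsplit, div_pow, ← Real.rpow_mul_natCast (by positivity),
    div_le_div_iff₀ (by positivity) (by positivity)]
  rw [show ((s + 1) * (2 : ℕ) : ℝ) = 2 * s + 2 by push_cast; ring]
  nlinarith [hratio]

/-- The paper's kernel `K₂` with `p = -s`, `k₁ = j`, `k₂ = k - j`. -/
noncomputable def K2 (s : ℝ) (k j : ℤ) : ℝ :=
  |(k : ℝ)| ^ s * |(k - j : ℝ)| ^ (-s) / (|(j : ℝ)| * |(k - j : ℝ)|)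

theorem K2_nonneg (s : ℝ) (k j : ℤ) : 0 ≤ K2 s k j := by
  unfold K2
  positivity

-- `hnorm` keeps the mode `k = 0`; it carries weight `|0| ^ 0 = 1` when `s = 0`.
theorem K2_sq_le {s : ℝ} (hs1 : -2 ≤ s) (hs2 : s ≤ 0) (k j : ℤ) :
    K2 s k j ^ 2 ≤ 4 / (k : ℝ) ^ 2 + if k = 0 then 1 else 0 := by
  have one_le_abs {n : ℤ} (hn : n ≠ 0) : (1 : ℝ) ≤ |(n : ℝ)| := by
    exact_mod_cast Int.one_le_abs hn
  -- for `j = 0` and `j = k` the kernel is a division by zero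
  rcases eq_or_ne j 0 with rfl | hj
  · rw [show K2 s k 0 ^ 2 = 0 by simp [K2]]
    positivity
  rcases eq_or_ne k j with rfl | hkj
  · rw [show K2 s k k ^ 2 = 0 by simp [K2]]
    positivity
  rcases eq_or_ne k 0 with rfl | hk
  · rcases hs2.lt_or_eq with hs | rfl
    · simp [K2, Real.zero_rpow hs.ne]
    · have hinv := inv_le_one_of_one_le₀ (one_le_abs hj)
      simpa [K2] using mul_le_one₀ hinv (by positivity) hinv
  have hy := one_le_abs (sub_ne_zero.2 hkj)
  push_cast at hy
  have := kernel_sq_le_of_triangle (one_le_abs hk) hy (one_le_abs hj)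
    (by simpa using abs_add_le ((k : ℝ) - j) j) (by simpa using abs_sub (k : ℝ) j) hs1 hs2
  simpa [K2, hk, sq_abs] using this

theorem tsum_K2_sq_le {s : ℝ} (hs1 : -2 ≤ s) (hs2 : s ≤ 0) (j : ℤ) :
    ∑' k, ENNReal.ofReal (K2 s k j) ^ 2 ≤
      ENNReal.ofReal (∑' k : ℤ, (4 / (k : ℝ) ^ 2 + if k = 0 then 1 else 0)) := by
  have hsum : Summable fun k : ℤ => 4 / (k : ℝ) ^ 2 + if k = 0 then 1 else 0 := by
    refine .add ?_ (summable_of_ne_finset_zero (s := {0}) fun k hk => by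
      rw [Finset.mem_singleton] at hk
      simp [hk])
    exact (((Real.summable_one_div_int_pow (p := 2)).2 one_lt_two).mul_left 4).congr
      fun k => mul_one_div _ _
  rw [ENNReal.ofReal_tsum_of_nonneg (fun k => by positivity) hsum]
  refine ENNReal.tsum_le_tsum fun k => ?_
  rw [← ENNReal.ofReal_pow (K2_nonneg s k j)]
  exact ENNReal.ofReal_le_ofReal (K2_sq_le hs1 hs2 k j)

noncomputable def weightedCoeff (s : ℝ) (u : ℤ → ℂ) (k : ℤ) : ℝ≥0∞ :=
  ENNReal.ofReal (|(k : ℝ)| ^ s * ‖u k‖)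

theorem weightedCoeff_sq (s : ℝ) (u : ℤ → ℂ) (k : ℤ) :
    weightedCoeff s u k ^ 2 = ENNReal.ofReal (|(k : ℝ)| ^ (2 * s) * ‖u k‖ ^ 2) := by
  rw [weightedCoeff, ← ENNReal.ofReal_pow (by positivity), mul_pow, ← Real.rpow_natCast,
    ← Real.rpow_mul (abs_nonneg _), Nat.cast_ofNat, mul_comm s]

theorem hnorm_eq_toReal (s : ℝ) (u : ℤ → ℂ) :
    hnorm s u = (∑' k, weightedCoeff s u k ^ 2).toReal ^ (1 / 2 : ℝ) := by
  simp_rw [hnorm, weightedCoeff_sq, ENNReal.tsum_toReal_eq fun _ => ENNReal.ofReal_ne_top]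
  congr 1
  exact tsum_congr fun k => (ENNReal.toReal_ofReal (by positivity)).symm

theorem tsum_weightedCoeff_sq_ne_top {s : ℝ} {u : ℤ → ℂ}
    (h : Summable fun k : ℤ => |(k : ℝ)| ^ (2 * s) * ‖u k‖ ^ 2) :
    ∑' k, weightedCoeff s u k ^ 2 ≠ ⊤ := by
  simp_rw [weightedCoeff_sq, ← ENNReal.ofReal_tsum_of_nonneg (fun k => by positivity) h]
  exact ENNReal.ofReal_ne_top

theorem abs_rpow_mul_norm_B2_term (s t : ℝ) (u v : ℤ → ℂ) (k j : ℤ) :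
    |(k : ℝ)| ^ s *
        ‖Complex.exp (Complex.I * (3 * (k : ℂ) * (j : ℂ) * ((k : ℂ) - (j : ℂ)) * (t : ℂ)))
          / ((j : ℂ) * ((k : ℂ) - (j : ℂ))) * u j * v (k - j)‖ =
      K2 s k j * ‖u j‖ * (|((k - j : ℤ) : ℝ)| ^ s * ‖v (k - j)‖) := by
  have hphase :
      ‖Complex.exp (Complex.I * (3 * (k : ℂ) * (j : ℂ) * ((k : ℂ) - (j : ℂ)) * (t : ℂ)))‖ = 1 := by
    simpa using Complex.norm_exp_I_mul_ofReal (3 * k * j * (k - j) * t)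
  rcases eq_or_ne k j with rfl | hkj
  · simp [K2]
  have hy : 0 < |(k - j : ℝ)| := abs_pos.2 (sub_ne_zero.2 (Int.cast_injective.ne hkj))
  rw [norm_mul, norm_mul, norm_div, hphase, norm_mul, ← Int.cast_sub, Complex.norm_intCast,
    Complex.norm_intCast, K2]
  push_cast
  rw [Real.rpow_neg hy.le]
  field_simp

theorem weightedCoeff_B2_le (s t : ℝ) (u v : ℤ → ℂ) (k : ℤ) :
    weightedCoeff s (B2 t u v) k ≤
      ∑' j, ENNReal.ofReal (K2 s k j) * weightedCoeff 0 u j * weightedCoeff s v (k - j) := by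
  rw [weightedCoeff, ENNReal.ofReal_mul (by positivity), ofReal_norm, B2]
  refine (mul_le_mul_right enorm_tsum_le_tsum_enorm _).trans_eq ?_
  rw [← ENNReal.tsum_mul_left]
  refine tsum_congr fun j => ?_
  rw [← ofReal_norm, ← ENNReal.ofReal_mul (Real.rpow_nonneg (abs_nonneg _) _),
    abs_rpow_mul_norm_B2_term, ENNReal.ofReal_mul (mul_nonneg (K2_nonneg s k j) (norm_nonneg _)),
    ENNReal.ofReal_mul (K2_nonneg s k j)]
  simp [weightedCoeff]

theorem B2_mixed_bound (s : ℝ) (hs1 : -(7 / 4) < s) (hs2 : s ≤ 0) :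
    ∃ C : ℝ, ∀ (t : ℝ) (u v : ℤ → ℂ), u 0 = 0 → v 0 = 0 →
      (Summable fun k : ℤ => ‖u k‖ ^ 2) →
      (Summable fun k : ℤ => |(k : ℝ)| ^ (2 * s) * ‖v k‖ ^ 2) →
      hnorm s (B2 t u v) ≤ C * hnorm 0 u * hnorm s v := by
  set M := ENNReal.ofReal (∑' k : ℤ, (4 / (k : ℝ) ^ 2 + if k = 0 then 1 else 0))
  refine ⟨M.toReal ^ (1 / 2 : ℝ), fun t u v _ _ hu hv => ?_⟩
  have hB : ∑' k, weightedCoeff s (B2 t u v) k ^ 2 ≤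
      M * (∑' k, weightedCoeff 0 u k ^ 2) * ∑' k, weightedCoeff s v k ^ 2 :=
    ENNReal.tsum_sq_le_of_le_tsum_conv _ (weightedCoeff_B2_le s t u v)
      (tsum_K2_sq_le (by linarith) hs2)
  simp only [hnorm_eq_toReal]
  exact ENNReal.toReal_rpow_half_le_of_le_mul hB ENNReal.ofReal_ne_top
    (tsum_weightedCoeff_sq_ne_top (by simpa using hu)) (tsum_weightedCoeff_sq_ne_top hv)
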